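/- There is a universal constant C such that the following holds. Let R ⊆ ℤ×ℤ be a finite set such that Γ_R = G_Δ|_R is connected and hole-free, and let 𝒬 be a set of k ≥ 1 y-portals of Γ_R (called gates). Then there exist m ≤ C·k subsets T_1,…,T_m ⊆ R with T_1 ∪ … ∪ T_m = R such that each T_j induces a connected subgraph of Γ_R, each T_j has no inner holes, and each T_j intersects at most two of the gates in 𝒬 (each T_j is a tunnel region). -/

import Mathlib

open SimpleGraph

/-- The infinite triangular grid graph on `ℤ × ℤ`. -/
def triGrid : SimpleGraph (ℤ × ℤ) where
  Adj u v := u - v = (1, 0) ∨ u - v = (-1, 0) ∨ u - v = (0, 1) ∨ u - v = (0, -1) ∨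
    u - v = (1, -1) ∨ u - v = (-1, 1)
  symm := by
    constructor
    intro u v h
    have hvu : v - u = -(u - v) := by ring
    rcases h with h | h | h | h | h | h <;> rw [hvu, h] <;> simp [Prod.ext_iff]
  loopless := by
    constructor
    intro u h
    simp [Prod.ext_iff] at h

/-- A finite set is hole-free (simple) if every connected component of the complement
is infinite, i.e., there are no inner holes. -/
def HoleFree (S : Set (ℤ × ℤ)) : Prop :=
  ∀ C : (triGrid.induce Sᶜ).ConnectedComponent, C.supp.Infinite

/-- The graph on `V` whose edges are the edges of the induced grid graph in direction `±e`. -/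
def portalLineGraph (V : Set (ℤ × ℤ)) (e : ℤ × ℤ) : SimpleGraph V where
  Adj u v := triGrid.Adj u v ∧ ((u : ℤ × ℤ) - v = e ∨ (v : ℤ × ℤ) - u = e)
  symm := ⟨fun u v ⟨h, h'⟩ => ⟨h.symm, h'.symm⟩⟩
  loopless := ⟨fun u ⟨h, _⟩ => triGrid.loopless.irrefl u h⟩

/-- The `e`-portals of the induced subgraph on `V`: connected components of `portalLineGraph`. -/
abbrev Portal (V : Set (ℤ × ℤ)) (e : ℤ × ℤ) := (portalLineGraph V e).ConnectedComponent

/-- The portal containing a given vertex. -/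
def portalMk (V : Set (ℤ × ℤ)) (e : ℤ × ℤ) (u : V) : Portal V e :=
  (portalLineGraph V e).connectedComponentMk u

/-- The `e`-portal graph: vertices are the `e`-portals, two portals being adjacent iff
some edge of the induced grid graph joins them. -/
def portalGraph (V : Set (ℤ × ℤ)) (e : ℤ × ℤ) : SimpleGraph (Portal V e) where
  Adj P Q := P ≠ Q ∧ ∃ u v : V, (triGrid.induce V).Adj u v ∧
    portalMk V e u = P ∧ portalMk V e v = Q
  symm := ⟨fun P Q ⟨hne, u, v, h, hu, hv⟩ => ⟨hne.symm, v, u, h.symm, hv, hu⟩⟩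
  loopless := ⟨fun P h => h.1 rfl⟩

/-- Distance between the portals of `u` and `v` in the `e`-portal graph. -/
noncomputable def portalDist (V : Set (ℤ × ℤ)) (e : ℤ × ℤ) (u v : V) : ℕ :=
  (portalGraph V e).dist (portalMk V e u) (portalMk V e v)

/-- A set `P` is an `e`-portal of the induced subgraph on `V` (as a set of grid points). -/
def IsPortal (V : Set (ℤ × ℤ)) (e : ℤ × ℤ) (P : Set (ℤ × ℤ)) : Prop :=
  ∃ C : Portal V e, P = Subtype.val '' C.supp

/-- `R` is geodesically convex in the subgraph induced on `V`: for all `u, v ∈ R`,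
every shortest `u`–`v` path in the induced graph stays inside `R`. -/
def GeodesicallyConvex (V R : Set (ℤ × ℤ)) : Prop :=
  ∀ u v : V, (u : ℤ × ℤ) ∈ R → (v : ℤ × ℤ) ∈ R →
    ∀ p : (triGrid.induce V).Walk u v, p.length = (triGrid.induce V).dist u v →
      ∀ w ∈ p.support, (w : ℤ × ℤ) ∈ R

/-!
Take `C = 1`. The `y`-portals partition `R`, and since `R` is connected so is its portal graph.
Attaching every component of the portal graph minus the gates to a gate adjacent to it splits the
portals into `k` connected groups with one gate each; the union of the portals of a group is then
connected. It is hole-free because from a point of `R` outside it, walking in direction `e_y`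
stays inside one portal, hence outside the union, until it leaves `R`, and the complement of the
hole-free region `R` has no finite components.
-/

namespace SimpleGraph

variable {V W : Type*} {G : SimpleGraph V}

lemma ConnectedComponent.connected_induce_image_supp {H : SimpleGraph W} (f : H →g G)
    (C : H.ConnectedComponent) : (G.induce (f '' C.supp)).Connected := by
  refine C.connected_toSimpleGraph.map (induceHom f (Set.mapsTo_image f C.supp)) ?_
  rintro ⟨_, x, hx, rfl⟩
  exact ⟨⟨x, hx⟩, rfl⟩

lemma induce_iUnion_connected {ι : Type*} {H : SimpleGraph ι} (hH : H.Connected)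
    {f : ι → Set V} (hf : ∀ i, (G.induce (f i)).Connected)
    (hadj : ∀ i j, H.Adj i j → ∃ u ∈ f i, ∃ v ∈ f j, G.Adj u v) :
    (G.induce (⋃ i, f i)).Connected := by
  have hpiece : ∀ i {u v} (hu : u ∈ f i) (hv : v ∈ f i), (G.induce (⋃ i, f i)).Reachable
      ⟨u, Set.mem_iUnion_of_mem i hu⟩ ⟨v, Set.mem_iUnion_of_mem i hv⟩ := fun i _ _ hu hv =>
    ((hf i).preconnected ⟨_, hu⟩ ⟨_, hv⟩).map (induceHomOfLE G (Set.subset_iUnion f i)).toHom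
  have hwalk : ∀ {i j} (_ : H.Walk i j) {u v} (hu : u ∈ f i) (hv : v ∈ f j),
      (G.induce (⋃ i, f i)).Reachable
        ⟨u, Set.mem_iUnion_of_mem i hu⟩ ⟨v, Set.mem_iUnion_of_mem j hv⟩ := by
    intro i j p
    induction p with
    | nil => exact hpiece _
    | cons hij _ ih =>
      intro u v hu hv
      obtain ⟨a, ha, b, hb, hab⟩ := hadj _ _ hij
      have hab' : (G.induce (⋃ i, f i)).Adj ⟨a, Set.mem_iUnion_of_mem _ ha⟩
          ⟨b, Set.mem_iUnion_of_mem _ hb⟩ := hab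
      exact ((hpiece _ hu ha).trans hab'.reachable).trans (ih hb hv)
  obtain ⟨i₀⟩ := hH.nonempty
  obtain ⟨⟨u₀, hu₀⟩⟩ := (hf i₀).nonempty
  refine (connected_iff_exists_forall_reachable _).mpr ⟨⟨u₀, Set.mem_iUnion_of_mem i₀ hu₀⟩, ?_⟩
  rintro ⟨v, hv⟩
  obtain ⟨j, hvj⟩ := Set.mem_iUnion.mp hv
  exact hwalk (hH.preconnected i₀ j).some hu₀ hvj

lemma Connected.exists_adj_of_connectedComponent_induce_compl (hG : G.Connected) {M : Set V}
    (hM : M.Nonempty) (D : (G.induce Mᶜ).ConnectedComponent) :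
    ∃ m ∈ M, ∃ u ∈ D.supp, G.Adj u m := by
  obtain ⟨m₀, hm₀⟩ := hM
  obtain ⟨x, rfl⟩ := D.exists_rep
  obtain ⟨d, -, ⟨u, hu, hdu⟩, hd⟩ := (hG.preconnected x m₀).some.exists_boundary_dart
    (Subtype.val '' ((G.induce Mᶜ).connectedComponentMk x).supp)
    ⟨x, rfl, rfl⟩ (fun ⟨y, _, hy⟩ => hy ▸ y.2 |>.elim hm₀)
  have hadj : G.Adj u d.snd := hdu ▸ d.adj
  refine ⟨d.snd, ?_, u, hu, hadj⟩
  by_contra hdM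
  exact hd ⟨⟨d.snd, hdM⟩, ConnectedComponent.mem_supp_of_adj_mem_supp _ hu hadj, rfl⟩

/-- `A m` is `m` together with the components of `G - M` attached to `m`, each component being
attached to a mark it is adjacent to. -/
lemma Connected.exists_connected_cover_by_marks (hG : G.Connected) {M : Set V} (hM : M.Nonempty) :
    ∃ A : V → Set V, (∀ m ∈ M, (G.induce (A m)).Connected ∧ A m ∩ M = {m}) ∧
      ∀ v, ∃ m ∈ M, v ∈ A m := by
  choose mark hmark u hu hadj using hG.exists_adj_of_connectedComponent_induce_compl hM
  let A : V → Set V := fun m => insert m (⋃ (D) (_ : mark D = m), Subtype.val '' D.supp)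
  refine ⟨A, fun m hm => ⟨?_, ?_⟩, fun v => ?_⟩
  · refine induce_connected_of_patches m (Set.mem_insert m _) ?_
    rintro v (rfl | hv)
    · exact ⟨{v}, by simp [A], rfl, rfl, Reachable.rfl⟩
    obtain ⟨D, hDm, hvD⟩ := Set.mem_iUnion₂.mp hv
    have hconn : (G.induce ({m} ∪ Subtype.val '' D.supp)).Connected :=
      connected_induce_union Preconnected.of_subsingleton
        (D.connected_induce_image_supp (Embedding.induce Mᶜ).toHom).preconnected rfl
        ⟨_, hu D, rfl⟩ (hDm ▸ hadj D).symm
    refine ⟨{m} ∪ Subtype.val '' D.supp, ?_, Or.inl rfl, Or.inr hvD, hconn.preconnected _ _⟩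
    exact Set.union_subset (by simp [A]) fun x hx => Or.inr (Set.mem_iUnion₂.mpr ⟨D, hDm, hx⟩)
  · refine Set.eq_singleton_iff_unique_mem.mpr ⟨⟨Set.mem_insert m _, hm⟩, ?_⟩
    rintro v ⟨rfl | hv, hvM⟩
    · rfl
    obtain ⟨D, -, w, -, rfl⟩ := Set.mem_iUnion₂.mp hv
    exact absurd hvM w.2
  · by_cases hv : v ∈ M
    · exact ⟨v, hv, Set.mem_insert v _⟩
    let D := (G.induce Mᶜ).connectedComponentMk ⟨v, hv⟩
    exact ⟨mark D, hmark D, Or.inr (Set.mem_iUnion₂.mpr ⟨D, rfl, ⟨v, hv⟩, rfl, rfl⟩)⟩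

lemma reachable_of_forall_add_nsmul_mem {V : Type*} [AddMonoid V] {s : Set V}
    {H : SimpleGraph s} {e : V} (hH : ∀ (z : s) (h : (z : V) + e ∈ s), H.Adj z ⟨_, h⟩)
    {z : V} {n : ℕ} (hs : ∀ i ≤ n, z + i • e ∈ s) :
    H.Reachable ⟨z, by simpa using hs 0 n.zero_le⟩ ⟨z + n • e, hs n le_rfl⟩ := by
  induction n with
  | zero => simp
  | succ n ih =>
    have hnext : z + n • e + e ∈ s := by simpa [succ_nsmul, add_assoc] using hs (n + 1) le_rfl
    convert (ih fun i hi => hs i (by omega)).trans (hH _ hnext).reachable using 2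
    simp [succ_nsmul, add_assoc]

end SimpleGraph

lemma exists_add_nsmul_notMem {s : Set (ℤ × ℤ)} (hs : s.Finite) {e : ℤ × ℤ} (he : e ≠ 0)
    (z : ℤ × ℤ) : ∃ n : ℕ, z + n • e ∉ s ∧ ∀ i < n, z + i • e ∈ s := by
  classical
  have hexit : ∃ n : ℕ, z + n • e ∉ s := by
    by_contra! hall
    refine hs.not_infinite (Set.infinite_of_injective_forall_mem (fun i j hij => ?_) hall)
    have hij : (i : ℤ) • e = (j : ℤ) • e := by simpa using hij
    exact_mod_cast smul_left_injective ℤ he hij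
  exact ⟨Nat.find hexit, Nat.find_spec hexit, fun i hi => not_not.mp (Nat.find_min hexit hi)⟩

lemma triGrid_adj_add {e : ℤ × ℤ} (he : triGrid.Adj 0 e) (z : ℤ × ℤ) : triGrid.Adj z (z + e) := by
  simpa only [triGrid, show z - (z + e) = 0 - e by abel] using he

/-- The component of `x` contains the infinite component of `y` in `Rᶜ`. -/
lemma HoleFree.of_subset_of_forall_reachable {R S : Set (ℤ × ℤ)} (hR : HoleFree R) (hSR : S ⊆ R)
    (hexit : ∀ x : ↥Sᶜ, ∃ y : ↥Sᶜ, (y : ℤ × ℤ) ∉ R ∧ (triGrid.induce Sᶜ).Reachable x y) :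
    HoleFree S := by
  intro D
  induction D using ConnectedComponent.ind with | _ x => ?_
  obtain ⟨y, hyR, hxy⟩ := hexit x
  have hRS : Rᶜ ⊆ Sᶜ := Set.compl_subset_compl.mpr hSR
  let incl := induceHomOfLE triGrid hRS
  refine ((hR ((triGrid.induce Rᶜ).connectedComponentMk ⟨y, hyR⟩)).image
    incl.injective.injOn).mono ?_
  rintro _ ⟨w, hw, rfl⟩
  exact ConnectedComponent.sound
    (hxy.trans ((ConnectedComponent.exact hw).map incl.toHom).symm).symm

section Portals

variable {R : Set (ℤ × ℤ)} {e : ℤ × ℤ}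

def portalUnion (R : Set (ℤ × ℤ)) (e : ℤ × ℤ) (B : Set (Portal R e)) : Set (ℤ × ℤ) :=
  ⋃ P : B, Subtype.val '' (P : Portal R e).supp

lemma mem_portalUnion {B : Set (Portal R e)} {z : ℤ × ℤ} :
    z ∈ portalUnion R e B ↔ ∃ h : z ∈ R, portalMk R e ⟨z, h⟩ ∈ B := by
  simp [portalUnion, portalMk, ConnectedComponent.mem_supp_iff]

lemma portalUnion_subset (B : Set (Portal R e)) : portalUnion R e B ⊆ R :=
  fun _ hz => (mem_portalUnion.mp hz).1

lemma mem_of_portalUnion_inter_nonempty {B : Set (Portal R e)} {C : Portal R e}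
    (h : (portalUnion R e B ∩ Subtype.val '' C.supp).Nonempty) : C ∈ B := by
  obtain ⟨_, hzB, u, hu, rfl⟩ := h
  obtain ⟨_, hB⟩ := mem_portalUnion.mp hzB
  rw [← (ConnectedComponent.mem_supp_iff _ _).mp hu]
  exact hB

lemma ncard_portals_inter_portalUnion_le_one {Q : Finset (Set (ℤ × ℤ))}
    (hQ : ∀ P ∈ Q, IsPortal R e P) {B : Set (Portal R e)}
    (hB : ({C | Subtype.val '' C.supp ∈ Q} ∩ B).Subsingleton) :
    {P | P ∈ Q ∧ (portalUnion R e B ∩ P).Nonempty}.ncard ≤ 1 := by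
  refine (Set.ncard_le_one_iff (Q.finite_toSet.subset fun P hP => hP.1)).mpr ?_
  rintro P P' ⟨hP, hPB⟩ ⟨hP', hP'B⟩
  obtain ⟨C, rfl⟩ := hQ P hP
  obtain ⟨C', rfl⟩ := hQ P' hP'
  rw [hB ⟨hP, mem_of_portalUnion_inter_nonempty hPB⟩ ⟨hP', mem_of_portalUnion_inter_nonempty hP'B⟩]

def portalLineGraphHom (R : Set (ℤ × ℤ)) (e : ℤ × ℤ) : portalLineGraph R e →g triGrid :=
  ⟨Subtype.val, fun h => h.1⟩

lemma portalGraph_connected (hR : (triGrid.induce R).Connected) :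
    (portalGraph R e).Connected := by
  have hreach (u v : R) : (portalGraph R e).Reachable (portalMk R e u) (portalMk R e v) := by
    obtain ⟨p⟩ := hR.preconnected u v
    induction p with
    | nil => rfl
    | @cons a b _ hab _ ih =>
      refine Reachable.trans ?_ ih
      by_cases hsame : portalMk R e a = portalMk R e b
      · rw [hsame]
      · exact Adj.reachable ⟨hsame, a, b, hab, rfl, rfl⟩
  obtain ⟨u⟩ := hR.nonempty
  exact (connected_iff_exists_forall_reachable _).mpr
    ⟨portalMk R e u, ConnectedComponent.ind (hreach u)⟩

lemma portalUnion_connected {B : Set (Portal R e)}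
    (hB : ((portalGraph R e).induce B).Connected) :
    (triGrid.induce (portalUnion R e B)).Connected :=
  induce_iUnion_connected hB
    (fun P => ConnectedComponent.connected_induce_image_supp (portalLineGraphHom R e) P)
    fun _ _ ⟨_, u, v, huv, hu, hv⟩ => ⟨u, ⟨u, hu, rfl⟩, v, ⟨v, hv, rfl⟩, huv⟩

lemma portalMk_add_nsmul (he : triGrid.Adj 0 e) {z : ℤ × ℤ} {n : ℕ}
    (hR : ∀ i ≤ n, z + i • e ∈ R) :
    portalMk R e ⟨z, by simpa using hR 0 n.zero_le⟩ = portalMk R e ⟨z + n • e, hR n le_rfl⟩ :=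
  ConnectedComponent.sound <| reachable_of_forall_add_nsmul_mem (H := portalLineGraph R e)
    (fun z _ => ⟨triGrid_adj_add he z, Or.inr (add_sub_cancel_left _ _)⟩) hR

lemma portalUnion_holeFree (hR : R.Finite) (hHF : HoleFree R) (he : triGrid.Adj 0 e)
    (B : Set (Portal R e)) : HoleFree (portalUnion R e B) := by
  refine hHF.of_subset_of_forall_reachable (portalUnion_subset B) fun ⟨x, hx⟩ => ?_
  by_cases hxR : x ∈ R
  swap
  · exact ⟨⟨x, hx⟩, hxR, Reachable.rfl⟩
  obtain ⟨n, hnR, hlt⟩ := exists_add_nsmul_notMem hR (triGrid.ne_of_adj he).symm x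
  have hout : ∀ i ≤ n, x + i • e ∈ (portalUnion R e B)ᶜ := by
    intro i hi hiB
    rcases hi.lt_or_eq with hi | rfl
    · obtain ⟨hiR, hiB⟩ := mem_portalUnion.mp hiB
      rw [← portalMk_add_nsmul he fun j hj => hlt j (by omega)] at hiB
      exact hx (mem_portalUnion.mpr ⟨hxR, hiB⟩)
    · exact hnR (portalUnion_subset B hiB)
  exact ⟨⟨_, hout n le_rfl⟩, hnR,
    reachable_of_forall_add_nsmul_mem (fun z _ => triGrid_adj_add he z) hout⟩

end Portals

/-- There is a universal constant `C` such that every finite, connected,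
hole-free region `R` with a set `𝒬` of `k ≥ 1` `y`-portal gates can be decomposed into at
most `C * k` connected, hole-free tunnel regions, each intersecting at most two gates. -/
theorem decomposition_into_tunnel_regions :
    ∃ C : ℕ, ∀ (R : Set (ℤ × ℤ)), R.Finite → (triGrid.induce R).Connected → HoleFree R →
      ∀ (k : ℕ), 1 ≤ k → ∀ (Q : Finset (Set (ℤ × ℤ))), Q.card = k →
      (∀ P ∈ Q, IsPortal R (0, 1) P) →
      ∃ m : ℕ, m ≤ C * k ∧ ∃ T : Fin m → Set (ℤ × ℤ),
        (∀ j, T j ⊆ R) ∧ (⋃ j, T j) = R ∧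
        ∀ j, (triGrid.induce (T j)).Connected ∧ HoleFree (T j) ∧
          {P | P ∈ Q ∧ (T j ∩ P).Nonempty}.ncard ≤ 2 := by
  refine ⟨1, fun R hRfin hRconn hHF k hk Q hQcard hQportal => ?_⟩
  let M : Set (Portal R (0, 1)) := {C | Subtype.val '' C.supp ∈ Q}
  choose gate hgate using hQportal
  have hgateM (P : Set (ℤ × ℤ)) (hP : P ∈ Q) : gate P hP ∈ M := by
    change _ ∈ Q
    rwa [← hgate P hP]
  have hgate_of_mem {C} (hC : C ∈ M) : gate _ hC = C := ConnectedComponent.supp_injective <|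
    Set.image_injective.mpr Subtype.val_injective (hgate _ hC).symm
  obtain ⟨P₀, hP₀⟩ : Q.Nonempty := Finset.card_pos.mp (by omega)
  obtain ⟨A, hA, hcover⟩ :=
    (portalGraph_connected hRconn).exists_connected_cover_by_marks ⟨_, hgateM P₀ hP₀⟩
  let idx := Q.equivFinOfCardEq hQcard
  let mark (j : Fin k) := gate _ (idx.symm j).2
  refine ⟨k, by omega, fun j => portalUnion R (0, 1) (A (mark j)), fun j => portalUnion_subset _,
    ?_, fun j => ⟨portalUnion_connected (hA _ (hgateM _ _)).1,
      portalUnion_holeFree hRfin hHF (by simp [triGrid]) _,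
      (ncard_portals_inter_portalUnion_le_one (fun P hP => ⟨_, hgate P hP⟩) ?_).trans one_le_two⟩⟩
  · refine (Set.iUnion_subset fun j => portalUnion_subset _).antisymm fun z hz => ?_
    obtain ⟨C, hC, hzC⟩ := hcover (portalMk R (0, 1) ⟨z, hz⟩)
    refine Set.mem_iUnion.mpr ⟨idx ⟨_, hC⟩, mem_portalUnion.mpr ⟨hz, ?_⟩⟩
    simpa [mark, hgate_of_mem hC] using hzC
  · rw [Set.inter_comm, (hA _ (hgateM _ _)).2]
    exact Set.subsingleton_singleton
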